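/- Every covering morphism of group-groupoids is regular: if p : H → G is a morphism of group-groupoids whose underlying groupoid morphism is a covering morphism, then for every object y of H, the image p(H(y)) is a normal subgroup of G(p(y)). -/
import Mathlib

universe u v

structure GroupGroupoid where
  Obj : Type u
  Arr : Type v
  [objGroup : Group Obj]
  [arrGroup : Group Arr]
  src : Arr →* Obj
  tgt : Arr →* Obj
  ident : Obj →* Arr
  comp : (a b : Arr) → tgt a = src b → Arr
  ginv : Arr → Arr
  src_ident : ∀ x, src (ident x) = x
  tgt_ident : ∀ x, tgt (ident x) = x
  src_comp : ∀ a b h, src (comp a b h) = src a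
  tgt_comp : ∀ a b h, tgt (comp a b h) = tgt b
  ident_comp : ∀ (a : Arr) (h : tgt (ident (src a)) = src a), comp (ident (src a)) a h = a
  comp_ident : ∀ (a : Arr) (h : tgt a = src (ident (tgt a))), comp a (ident (tgt a)) h = a
  comp_assoc : ∀ (a b c : Arr) (h1 : tgt a = src b) (h2 : tgt (comp a b h1) = src c)
    (h3 : tgt b = src c) (h4 : tgt a = src (comp b c h3)),
    comp (comp a b h1) c h2 = comp a (comp b c h3) h4
  src_ginv : ∀ a, src (ginv a) = tgt a
  tgt_ginv : ∀ a, tgt (ginv a) = src a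
  comp_ginv : ∀ (a : Arr) (h : tgt a = src (ginv a)), comp a (ginv a) h = ident (src a)
  ginv_comp : ∀ (a : Arr) (h : tgt (ginv a) = src a), comp (ginv a) a h = ident (tgt a)
  comp_mul : ∀ (a b c d : Arr) (h1 : tgt a = src b) (h2 : tgt c = src d)
    (h3 : tgt (a * c) = src (b * d)), comp (a * c) (b * d) h3 = comp a b h1 * comp c d h2

attribute [instance] GroupGroupoid.objGroup GroupGroupoid.arrGroup

lemma comp_congr (G : GroupGroupoid) {a a' b b' : G.Arr} (ha : a = a') (hb : b = b')
    (h : G.tgt a = G.src b) :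
    G.comp a b h = G.comp a' b' (ha ▸ hb ▸ h) := by subst ha; subst hb; rfl

lemma comp_eq (G : GroupGroupoid) (a b : G.Arr) (h : G.tgt a = G.src b) :
    G.comp a b h = b * (G.ident (G.src b))⁻¹ * a := by
  have hx : G.tgt ((G.ident (G.src b))⁻¹ * a) = (1 : G.Obj) := by
    rw [map_mul, map_inv, G.tgt_ident, h, inv_mul_cancel]
  have ha : a = G.ident (G.src b) * ((G.ident (G.src b))⁻¹ * a) := by group
  have hb : b = b * G.ident 1 := by rw [map_one, mul_one]
  have h3 : G.tgt (G.ident (G.src b) * ((G.ident (G.src b))⁻¹ * a)) = G.src (b * G.ident 1) :=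
    by rw [← ha, ← hb, h]
  have key := G.comp_mul (G.ident (G.src b)) b ((G.ident (G.src b))⁻¹ * a) (G.ident 1)
    (G.tgt_ident _) (by rw [hx, G.src_ident]) h3
  have e1 : G.comp (G.ident (G.src b)) b (G.tgt_ident _) = b := G.ident_comp b _
  have e2 : G.comp ((G.ident (G.src b))⁻¹ * a) (G.ident 1) (by rw [hx, G.src_ident]) = (G.ident (G.src b))⁻¹ * a := by
    rw [comp_congr G rfl (show G.ident 1 = G.ident (G.tgt ((G.ident (G.src b))⁻¹ * a)) by rw [hx])]
    exact G.comp_ident _ _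
  rw [e1, e2] at key
  rw [comp_congr G ha hb h, key, mul_assoc]

lemma ginv_eq (G : GroupGroupoid) (a : G.Arr) :
    G.ginv a = G.ident (G.src a) * a⁻¹ * G.ident (G.tgt a) := by
  have h : G.tgt a = G.src (G.ginv a) := (G.src_ginv a).symm
  have key := G.comp_ginv a h
  rw [comp_eq, G.src_ginv] at key
  have : G.ginv a * (G.ident (G.tgt a))⁻¹ = G.ident (G.src a) * a⁻¹ := by
    rw [← key]; group
  calc G.ginv a = G.ginv a * (G.ident (G.tgt a))⁻¹ * G.ident (G.tgt a) := by group
    _ = G.ident (G.src a) * a⁻¹ * G.ident (G.tgt a) := by rw [this]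

structure GGHom (H G : GroupGroupoid) where
  fObj : H.Obj →* G.Obj
  fArr : H.Arr →* G.Arr
  src_comm : ∀ a, G.src (fArr a) = fObj (H.src a)
  tgt_comm : ∀ a, G.tgt (fArr a) = fObj (H.tgt a)
  ident_comm : ∀ x, fArr (H.ident x) = G.ident (fObj x)
  comp_comm : ∀ (a b : H.Arr) (h : H.tgt a = H.src b)
    (h' : G.tgt (fArr a) = G.src (fArr b)),
    fArr (H.comp a b h) = G.comp (fArr a) (fArr b) h'

/-- `p` is a covering morphism: it induces a bijection on each star. -/
def GGHom.IsCovering {H G : GroupGroupoid} (p : GGHom H G) : Prop :=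
  ∀ x : H.Obj, Function.Bijective
    (fun a : {a : H.Arr // H.src a = x} =>
      (⟨p.fArr a.1, by rw [p.src_comm, a.2]⟩ : {b : G.Arr // G.src b = p.fObj x}))

theorem covering_is_regular (H G : GroupGroupoid) (p : GGHom H G)
    (hcov : p.IsCovering) (y : H.Obj) :
    ∀ g : G.Arr, G.src g = p.fObj y → G.tgt g = p.fObj y →
    ∀ m : G.Arr, (∃ a : H.Arr, H.src a = y ∧ H.tgt a = y ∧ p.fArr a = m) →
    ∀ (h1 : G.tgt (G.ginv g) = G.src m)
      (h2 : G.tgt (G.comp (G.ginv g) m h1) = G.src g),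
    ∃ a : H.Arr, H.src a = y ∧ H.tgt a = y ∧
      p.fArr a = G.comp (G.comp (G.ginv g) m h1) g h2 := by
  intro g hsg htg m hm h1 h2
  obtain ⟨a, hsa, hta, hpa⟩ := hm
  obtain ⟨⟨b, hsb⟩, hpb⟩ := (hcov y).2 ⟨g, hsg⟩
  have hpb' : p.fArr b = g := congrArg Subtype.val hpb
  have hpz : p.fObj (H.tgt b) = p.fObj y := by rw [← p.tgt_comm, hpb', htg]
  have hsm : G.src m = p.fObj y := by rw [← h1, G.tgt_ginv, hsg]
  refine ⟨b * (H.ident (H.tgt b))⁻¹ * a * b⁻¹ * H.ident (H.tgt b), ?_, ?_, ?_⟩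
  · simp only [map_mul, map_inv, H.src_ident, hsa, hsb]
    group
  · simp only [map_mul, map_inv, H.tgt_ident, hta]
    group
  · simp only [map_mul, map_inv, hpa, hpb', p.ident_comm, hpz,
      comp_eq, ginv_eq, hsg, htg, hsm, G.src_comp, G.tgt_ginv, G.src_ginv]
    group
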